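/- arXiv:2107.08380 — 3 statements merged into one kernel-verified Lean document; each statement's English description precedes it below -/
import Mathlib

section
/- Let $k, n_1, \ldots, n_k$ be positive integers with $n = \sum_{j=1}^k n_j$, and let $v_j \in [0,1)$ for $j = 1,\ldots,k$ determine stick-breaking weights $\tilde p_j = v_j \prod_{i<j}(1-v_i)$. Then $\prod_{j=1}^{k} \tilde p_j^{n_j - 1} \big(1 - \sum_{l=1}^{j-1} \tilde p_l\big) = \prod_{j=1}^{k} v_j^{n_j - 1} (1 - v_j)^{\sum_{l > j} n_l}$, where $n_l = 0$ for $l > k$. -/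
lemma sb_sum (v p : ℕ → ℝ)
    (hp : ∀ j, p j = v j * ∏ i ∈ Finset.range j, (1 - v i)) (j : ℕ) :
    1 - ∑ l ∈ Finset.range j, p l = ∏ i ∈ Finset.range j, (1 - v i) := by
  induction j with
  | zero => simp
  | succ j ih =>
    rw [Finset.sum_range_succ, Finset.prod_range_succ, hp, ← ih]
    ring

/-- The stick-breaking identity underlying the updating of weights in the ordered
allocation sampler:
`∏_{j=1}^k p̃_j^{n_j-1} (1 - ∑_{l<j} p̃_l) = ∏_{j=1}^k v_j^{n_j-1} (1-v_j)^{∑_{l>j} n_l}`. -/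
theorem stick_breaking_weight_identity
    (k : ℕ) (hk : 1 ≤ k) (n : ℕ → ℕ) (hn : ∀ j < k, 1 ≤ n j)
    (v : ℕ → ℝ) (hv : ∀ j < k, v j ∈ Set.Ico (0 : ℝ) 1)
    (p : ℕ → ℝ) (hp : ∀ j, p j = v j * ∏ i ∈ Finset.range j, (1 - v i)) :
    ∏ j ∈ Finset.range k, (p j ^ (n j - 1) * (1 - ∑ l ∈ Finset.range j, p l))
      = ∏ j ∈ Finset.range k,
          (v j ^ (n j - 1) * (1 - v j) ^ (∑ l ∈ Finset.Ico (j + 1) k, n l)) := by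
  have key : ∀ j ∈ Finset.range k,
      p j ^ (n j - 1) * (1 - ∑ l ∈ Finset.range j, p l)
        = v j ^ (n j - 1) * ∏ i ∈ Finset.range j, (1 - v i) ^ (n j) := by
    intro j hj
    rw [hp j, sb_sum v p hp, mul_pow, mul_assoc, ← Finset.prod_pow,
      ← Finset.prod_mul_distrib]
    congr 1
    refine Finset.prod_congr rfl fun i _ => ?_
    rw [← pow_succ]
    congr 1
    have := hn j (Finset.mem_range.mp hj)
    omega
  rw [Finset.prod_congr rfl key, Finset.prod_mul_distrib, Finset.prod_mul_distrib]
  congr 1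
  rw [Finset.prod_comm' (t := fun j => Finset.range j)
    (s' := fun i => Finset.Ico (i + 1) k) (t' := Finset.range k)]
  · exact Finset.prod_congr rfl fun i _ => Finset.prod_pow_eq_pow_sum _ _ _
  · intro i j
    simp only [Finset.mem_range, Finset.mem_Ico]
    omega
end

section
/- For integers $n \geq k_n \geq 1$ and $\hat\gamma \in (0,1)$, $\sum_{m=k_n}^{\infty} \frac{\prod_{j=1}^{k_n - 1}(m-j)}{(1+m)_{n-1}} \cdot \frac{\hat\gamma (1-\hat\gamma)_{m-1}}{m!} = \frac{(k_n - 1)! \, (1-\hat\gamma)_{k_n - 1} \, (\hat\gamma)_{n - k_n}}{(n-1)! \, (1+\hat\gamma)_{n-1}}$. -/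
/-!
With `m = k + t`, the summand is a constant multiple of the `t`-th term of Gauss's series
`₂F₁(k, k - γ; k + n; 1)`, so the identity is Gauss's summation theorem
`₂F₁(a, b; c; 1) = (c - a)_a / (c - a - b)_a` for a natural number `a`. That case follows by
induction on `a` from the contiguous relation `(c - a - 1 - b) F(a + 1) = (c - a - 1) F(a)`,
whose partial sums telescope up to a boundary term `(b + N) T_N`, where `T_N` is the `N`-th
term of `F(a + 1)`. The boundary term must tend to `0`: a nonzero limit would make `T_N`
comparable to `1 / N`, contradicting the convergence of `∑ T_N`.
-/

open Finset Filter Topology Asymptotics Polynomial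
open scoped Nat

theorem ascPochhammer_eval_eq_prod_range {R : Type*} [CommSemiring R] (n : ℕ) (x : R) :
    (ascPochhammer R n).eval x = ∏ i ∈ range n, (x + i) := by
  induction n with
  | zero => simp
  | succ n ih => rw [ascPochhammer_succ_eval, ih, prod_range_succ]

theorem ascPochhammer_eval_add {R : Type*} [CommSemiring R] (m n : ℕ) (x : R) :
    (ascPochhammer R (m + n)).eval x =
      (ascPochhammer R m).eval x * (ascPochhammer R n).eval (x + m) := by
  rw [← ascPochhammer_mul, eval_mul, eval_comp]
  simp

theorem ascPochhammer_eval_succ_left {R : Type*} [CommSemiring R] (n : ℕ) (x : R) :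
    (ascPochhammer R (n + 1)).eval x = x * (ascPochhammer R n).eval (x + 1) := by
  simp [ascPochhammer_succ_left]

theorem ascPochhammer_eval_natCast_add_one {K : Type*} [Field K] [CharZero K] (r n : ℕ) :
    (ascPochhammer K n).eval ((r : K) + 1) = (r + n)! / r ! := by
  rw [eq_div_iff (Nat.cast_ne_zero.mpr r.factorial_ne_zero), mul_comm, factorial_mul_ascPochhammer]

theorem prod_Icc_one_sub_natCast {R : Type*} [CommRing R] (x : R) (p : ℕ) :
    ∏ j ∈ Icc 1 p, (x - j) = (ascPochhammer R p).eval (x - p) := by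
  induction p with
  | zero => simp
  | succ p ih =>
    rw [prod_Icc_succ_top (by omega), ih, ascPochhammer_eval_succ_left, mul_comm]
    congr 2
    push_cast
    ring

theorem eq_zero_of_summable_of_tendsto_natCast_mul {f : ℕ → ℝ} {L : ℝ} (hf : Summable f)
    (h : Tendsto (fun n : ℕ => n * f n) atTop (𝓝 L)) : L = 0 := by
  by_contra hL
  have hO : (fun n : ℕ => 1 / (n : ℝ)) =O[atTop] f := by
    refine (((h.inv₀ hL).isBigO_one ℝ).mul (isBigO_refl f atTop)).congr' ?_ (by simp)
    filter_upwards [h.eventually_ne hL] with n hn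
    rw [mul_ne_zero_iff] at hn
    field_simp [hn.1, hn.2]
  exact Real.not_summable_one_div_natCast (summable_of_isBigO_nat hf hO)

section Gauss

variable {a b c : ℝ}

@[simp]
theorem ordinaryHypergeometricCoefficient_zero :
    ordinaryHypergeometricCoefficient a b c 0 = 1 := by
  simp [ordinaryHypergeometricCoefficient]

theorem ordinaryHypergeometricCoefficient_nonneg (ha : 0 ≤ a) (hb : 0 ≤ b) (hc : 0 < c)
    (j : ℕ) :
    0 ≤ ordinaryHypergeometricCoefficient a b c j := by
  simp only [ordinaryHypergeometricCoefficient, ascPochhammer_eval_eq_prod_range]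
  positivity

theorem ordinaryHypergeometricCoefficient_succ {j : ℕ} (hc : c + j ≠ 0) :
    (c + j) * (j + 1) * ordinaryHypergeometricCoefficient a b c (j + 1) =
      (a + j) * (b + j) * ordinaryHypergeometricCoefficient a b c j := by
  simp only [ordinaryHypergeometricCoefficient, ascPochhammer_succ_eval, Nat.factorial_succ]
  push_cast
  rcases eq_or_ne ((ascPochhammer ℝ j).eval c) 0 with h | h
  · simp [h]
  · field_simp

theorem add_natCast_mul_ordinaryHypergeometricCoefficient (j : ℕ) :
    (a + j) * ordinaryHypergeometricCoefficient a b c j =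
      a * ordinaryHypergeometricCoefficient (a + 1) b c j := by
  have h := (ascPochhammer_succ_eval j a).symm.trans (ascPochhammer_eval_succ_left j a)
  simp only [ordinaryHypergeometricCoefficient]
  linear_combination ((j ! : ℝ)⁻¹ * (ascPochhammer ℝ j).eval b *
    ((ascPochhammer ℝ j).eval c)⁻¹) * h

theorem ordinaryHypergeometricCoefficient_contiguous (ha : 0 ≤ a) (hc : 0 < c) (j : ℕ) :
    (c - a - 1 - b) * ordinaryHypergeometricCoefficient (a + 1) b c (j + 1) -
        (c - a - 1) * ordinaryHypergeometricCoefficient a b c (j + 1) =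
      (b + j) * ordinaryHypergeometricCoefficient (a + 1) b c j -
        (b + j + 1) * ordinaryHypergeometricCoefficient (a + 1) b c (j + 1) := by
  have hT := ordinaryHypergeometricCoefficient_succ (a := a + 1) (b := b) (j := j)
    (by positivity : c + j ≠ 0)
  have hS := add_natCast_mul_ordinaryHypergeometricCoefficient (a := a) (b := b) (c := c) (j + 1)
  have ha' : a + 1 + j ≠ 0 := by positivity
  refine (mul_right_inj' ha').mp ?_
  push_cast at hS ⊢
  linear_combination (a + 1 - c) * hS + hT

theorem sum_range_succ_ordinaryHypergeometricCoefficient_contiguous (ha : 0 ≤ a) (hc : 0 < c)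
    (N : ℕ) :
    (c - a - 1 - b) * ∑ j ∈ range (N + 1), ordinaryHypergeometricCoefficient (a + 1) b c j =
      (c - a - 1) * ∑ j ∈ range (N + 1), ordinaryHypergeometricCoefficient a b c j -
        (b + N) * ordinaryHypergeometricCoefficient (a + 1) b c N := by
  induction N with
  | zero => simp
  | succ N ih =>
    rw [sum_range_succ, sum_range_succ _ (N + 1)]
    have h := ordinaryHypergeometricCoefficient_contiguous (b := b) ha hc N
    push_cast at h ⊢
    linear_combination ih + h

theorem summable_ordinaryHypergeometricCoefficient_add_one (ha : 0 ≤ a) (hb : 0 < b)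
    (hc : a + 1 + b < c) (hS : Summable (ordinaryHypergeometricCoefficient a b c)) :
    Summable (ordinaryHypergeometricCoefficient (a + 1) b c) := by
  set S := ordinaryHypergeometricCoefficient a b c
  set T := ordinaryHypergeometricCoefficient (a + 1) b c
  have hc0 : 0 < c := by linarith
  have hT0 : ∀ j, 0 ≤ T j := ordinaryHypergeometricCoefficient_nonneg (by linarith) hb.le hc0
  have hS0 : ∀ j, 0 ≤ S j := ordinaryHypergeometricCoefficient_nonneg ha hb.le hc0
  refine summable_of_sum_range_le hT0 (c := (c - a - 1) * (∑' j, S j) / (c - a - 1 - b))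
    fun N => ?_
  rw [le_div_iff₀ (by linarith)]
  calc (∑ j ∈ range N, T j) * (c - a - 1 - b)
      ≤ (c - a - 1 - b) * ∑ j ∈ range (N + 1), T j := by
        rw [mul_comm, sum_range_succ]
        nlinarith [hT0 N]
    _ = (c - a - 1) * ∑ j ∈ range (N + 1), S j - (b + N) * T N :=
        sum_range_succ_ordinaryHypergeometricCoefficient_contiguous ha hc0 N
    _ ≤ (c - a - 1) * ∑' j, S j := by
        have := hS.sum_le_tsum (range (N + 1)) fun j _ => hS0 j
        nlinarith [hT0 N]

theorem hasSum_ordinaryHypergeometricCoefficient_contiguous (ha : 0 ≤ a) (hc : 0 < c)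
    {σ τ : ℝ} (hS : HasSum (ordinaryHypergeometricCoefficient a b c) σ)
    (hT : HasSum (ordinaryHypergeometricCoefficient (a + 1) b c) τ) :
    (c - a - 1 - b) * τ = (c - a - 1) * σ := by
  set T := ordinaryHypergeometricCoefficient (a + 1) b c
  set L := (c - a - 1) * σ - (c - a - 1 - b) * τ
  have hboundary : Tendsto (fun N : ℕ => (b + N) * T N) atTop (𝓝 L) := by
    have hpartial :=
      (((tendsto_add_atTop_iff_nat 1).mpr hS.tendsto_sum_nat).const_mul (c - a - 1)).sub
        (((tendsto_add_atTop_iff_nat 1).mpr hT.tendsto_sum_nat).const_mul (c - a - 1 - b))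
    refine hpartial.congr fun N => ?_
    linear_combination
      -sum_range_succ_ordinaryHypergeometricCoefficient_contiguous (b := b) ha hc N
  have hlim : Tendsto (fun N : ℕ => N * T N) atTop (𝓝 L) := by
    have h := hboundary.sub (hT.summable.tendsto_atTop_zero.const_mul b)
    rw [mul_zero, sub_zero] at h
    exact h.congr fun N => by ring
  linarith [eq_zero_of_summable_of_tendsto_natCast_mul hT.summable hlim]

theorem hasSum_ordinaryHypergeometricCoefficient_natCast (a : ℕ) (hb : 0 < b)
    (hc : a + b < c) :
    HasSum (ordinaryHypergeometricCoefficient (a : ℝ) b c)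
      ((ascPochhammer ℝ a).eval (c - a) / (ascPochhammer ℝ a).eval (c - a - b)) := by
  induction a with
  | zero =>
    simpa using hasSum_single (f := ordinaryHypergeometricCoefficient (0 : ℝ) b c) 0
      fun j hj => by
        simp [ordinaryHypergeometricCoefficient, ascPochhammer_ne_zero_eval_zero ℝ hj]
  | succ a ih =>
    push_cast at hc ⊢
    have hS := ih (by linarith)
    have ha : (0 : ℝ) ≤ a := a.cast_nonneg
    obtain ⟨τ, hT⟩ := summable_ordinaryHypergeometricCoefficient_add_one ha hb hc hS.summable
    have hτ := hasSum_ordinaryHypergeometricCoefficient_contiguous ha (by linarith) hS hT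
    have hpos := ascPochhammer_pos a (c - a - b) (by linarith)
    convert hT using 1
    rw [ascPochhammer_eval_succ_left, ascPochhammer_eval_succ_left,
      show c - (a + 1) + 1 = c - a by ring, show c - (a + 1) - b + 1 = c - a - b by ring]
    have hne : c - (a + 1) - b ≠ 0 := by linarith
    field_simp at hτ ⊢
    linear_combination -hτ

end Gauss

theorem gnedin_summand_eq_mul_ordinaryHypergeometricCoefficient {k n : ℕ} (hk : 1 ≤ k)
    (hn : 1 ≤ n) (γ : ℝ) (t : ℕ) :
    (∏ j ∈ Icc 1 (k - 1), ((k + t : ℝ) - j)) /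
          (∏ r ∈ range (n - 1), (1 + (k + t : ℝ) + r)) *
        (γ * ∏ i ∈ range (k + t - 1), (1 - γ + i)) / ((k + t)! : ℝ) =
      γ * (k - 1)! * (∏ i ∈ range (k - 1), (1 - γ + i)) / (k + n - 1)! *
        ordinaryHypergeometricCoefficient (k : ℝ) (k - γ) (k + n) t := by
  obtain ⟨k, rfl⟩ := Nat.exists_eq_add_of_le' hk
  obtain ⟨n, rfl⟩ := Nat.exists_eq_add_of_le' hn
  simp only [← ascPochhammer_eval_eq_prod_range, prod_Icc_one_sub_natCast,
    ordinaryHypergeometricCoefficient, Nat.add_sub_cancel, show k + 1 + t - 1 = k + t by omega,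
    show k + 1 + (n + 1) - 1 = k + n + 1 by omega, ascPochhammer_eval_add k t (1 - γ)]
  rw [show ((k + 1 : ℕ) + t - k : ℝ) = (t : ℕ) + 1 by push_cast; ring,
    show 1 + ((k + 1 : ℕ) + t : ℝ) = (k + 1 + t : ℕ) + 1 by push_cast; ring,
    show ((k + 1 : ℕ) + (n + 1 : ℕ) : ℝ) = (k + n + 1 : ℕ) + 1 by push_cast; ring,
    show ((k + 1 : ℕ) : ℝ) = (k : ℕ) + 1 by push_cast; ring,
    show (1 - γ + k : ℝ) = (k : ℕ) + 1 - γ by ring]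
  simp only [ascPochhammer_eval_natCast_add_one, show t + k = k + t by omega,
    show k + 1 + t + n = k + n + 1 + t by omega]
  field_simp

theorem mul_gauss_value_eq_gnedin_normalization {k n : ℕ} (hk : 1 ≤ k) (hkn : k ≤ n)
    {γ : ℝ} (hγ : 0 < γ) :
    γ * (k - 1)! * (∏ i ∈ range (k - 1), (1 - γ + i)) / (k + n - 1)! *
        ((ascPochhammer ℝ k).eval ((k + n : ℝ) - k) /
          (ascPochhammer ℝ k).eval ((k + n : ℝ) - k - (k - γ))) =
      ((k - 1)! : ℝ) * (∏ i ∈ range (k - 1), (1 - γ + i)) *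
          (∏ i ∈ range (n - k), (γ + i)) /
        (((n - 1)! : ℝ) * ∏ i ∈ range (n - 1), (1 + γ + i)) := by
  obtain ⟨k, rfl⟩ := Nat.exists_eq_add_of_le' hk
  obtain ⟨d, rfl⟩ := Nat.exists_eq_add_of_le hkn
  simp only [← ascPochhammer_eval_eq_prod_range, Nat.add_sub_cancel, Nat.add_sub_cancel_left,
    show k + 1 + d - 1 = k + d by omega, show k + 1 + (k + 1 + d) - 1 = k + d + (k + 1) by omega]
  have hden : ((k + 1 : ℕ) + (k + 1 + d : ℕ) - (k + 1 : ℕ) - ((k + 1 : ℕ) - γ) : ℝ) =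
      γ + d := by
    push_cast
    ring
  have hnum : ((k + 1 : ℕ) + (k + 1 + d : ℕ) - (k + 1 : ℕ) : ℝ) = (k + d : ℕ) + 1 := by
    push_cast
    ring
  rw [hden, hnum, ascPochhammer_eval_natCast_add_one]
  have hsplit : (ascPochhammer ℝ d).eval γ * (ascPochhammer ℝ (k + 1)).eval (γ + d) =
      γ * (ascPochhammer ℝ (k + d)).eval (1 + γ) := by
    rw [← ascPochhammer_eval_add, show d + (k + 1) = k + d + 1 by omega,
      ascPochhammer_eval_succ_left, add_comm γ 1]
  have h1 := ascPochhammer_pos (k + 1) (γ + d) (by positivity)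
  have h2 := ascPochhammer_pos (k + d) (1 + γ) (by positivity)
  field_simp
  linear_combination -(ascPochhammer ℝ k).eval (1 - γ) * hsplit

/-- Normalization constant for the full conditional of the number of components `m`
under Gnedin's prior:
`∑_{m=k}^∞ (∏_{j=1}^{k-1}(m-j)) / (1+m)_{n-1} · γ̂(1-γ̂)_{m-1}/m!
  = (k-1)! (1-γ̂)_{k-1} (γ̂)_{n-k} / ((n-1)! (1+γ̂)_{n-1})`.
The summation index `m = k + t` runs over `t : ℕ`. -/
theorem gnedin_conditional_normalization
    (n k : ℕ) (hk : 1 ≤ k) (hkn : k ≤ n) (γ : ℝ) (hγ0 : 0 < γ) (hγ1 : γ < 1) :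
    HasSum
      (fun t : ℕ =>
        (∏ j ∈ Finset.Icc 1 (k - 1), ((k + t : ℝ) - j)) /
            (∏ r ∈ Finset.range (n - 1), (1 + (k + t : ℝ) + r)) *
          (γ * ∏ i ∈ Finset.range (k + t - 1), (1 - γ + i)) /
            (Nat.factorial (k + t) : ℝ))
      ((Nat.factorial (k - 1) : ℝ) * (∏ i ∈ Finset.range (k - 1), (1 - γ + i)) *
          (∏ i ∈ Finset.range (n - k), (γ + i)) /
        ((Nat.factorial (n - 1) : ℝ) * ∏ i ∈ Finset.range (n - 1), (1 + γ + i))) := by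
  have hk' : (1 : ℝ) ≤ k := by exact_mod_cast hk
  have hkn' : (k : ℝ) ≤ n := by exact_mod_cast hkn
  have hgauss := (hasSum_ordinaryHypergeometricCoefficient_natCast k (b := k - γ) (c := k + n)
    (by linarith) (by linarith)).mul_left
      (γ * (k - 1)! * (∏ i ∈ range (k - 1), (1 - γ + i)) / (k + n - 1)!)
  rw [← mul_gauss_value_eq_gnedin_normalization hk hkn hγ0]
  exact hgauss.congr_fun fun t =>
    gnedin_summand_eq_mul_ordinaryHypergeometricCoefficient hk (hk.trans hkn) γ t
end

section
/- With $q_r = \mathbbm{p}(m = r \mid \cdot)$ denoting the normalized full conditional $q_r \propto \frac{\prod_{j=1}^{k_n-1}(r-j)}{(1+r)_{n-1}} \frac{\hat\gamma(1-\hat\gamma)_{r-1}}{r!}$ for $r \geq k_n$, the following recursion holds: $q_{r+1} = q_r \cdot \frac{r(r - \hat\gamma)}{(r - k_n + 1)(r + n)}$ for all $r \geq k_n$, and the initial value satisfies $q_{k_n} = \frac{\prod_{j=1}^{k_n}(\hat\gamma + n - j)}{\prod_{j=1}^{k_n}(n - 1 + j)}$. -/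
/-!
Everything reduces to identities between rising factorials `(x)_m = ∏_{i<m} (x + i)`.
Passing from `r` to `r + 1` multiplies `∏_{j<k} (r - j)` by `r / (r - k + 1)`, `(1 + r)_{n-1}` by
`(r + n) / (r + 1)` and `γ (1 - γ)_{r-1} / r!` by `(r - γ) / (r + 1)`, which gives the recursion.
At `r = k` the normalized weight collapses because `(1 + k)_{n-1} k! = (n - 1)! (n)_k`
(both are `(n + k - 1)!`) and `γ (1 + γ)_{n-1} = (γ)_n = (γ)_{n-k} (γ + n - k)_k`.
-/

open Finset Nat

section CommRing
variable {R : Type*} [CommRing R]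

theorem prod_Icc_one_sub_eq_prod_range (x : R) (m : ℕ) :
    ∏ j ∈ Icc 1 m, (x - j) = ∏ i ∈ range m, (x - m + i) := by
  induction m with
  | zero => simp
  | succ m ih =>
    rw [prod_Icc_succ_top (by omega), ih, prod_range_succ']
    push_cast
    congr 1
    · exact prod_congr rfl fun i _ => by ring
    · ring

theorem prod_Icc_one_add_eq_prod_range (x : R) (m : ℕ) :
    ∏ j ∈ Icc 1 m, (x + j) = ∏ i ∈ range m, (x + 1 + i) := by
  induction m with
  | zero => simp
  | succ m ih =>
    rw [prod_Icc_succ_top (by omega), ih, prod_range_succ]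
    push_cast
    ring

theorem mul_prod_range_add_one_add (x : R) (m : ℕ) :
    x * ∏ i ∈ range m, (x + 1 + i) = ∏ i ∈ range (m + 1), (x + i) := by
  rw [prod_range_succ']
  push_cast
  simp only [add_assoc, add_comm (1 : R), add_zero, mul_comm x]

theorem prod_range_add_one_add_mul (x : R) (m : ℕ) :
    (∏ i ∈ range m, (x + 1 + i)) * x = (∏ i ∈ range m, (x + i)) * (x + m) := by
  rw [mul_comm, mul_prod_range_add_one_add, prod_range_succ]

theorem prod_Icc_one_add_one_sub_mul (x : R) (m : ℕ) :
    (∏ j ∈ Icc 1 m, (x + 1 - j)) * (x - m) = (∏ j ∈ Icc 1 m, (x - j)) * x := by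
  have h := prod_range_add_one_add_mul (x - m) m
  rw [prod_Icc_one_sub_eq_prod_range, prod_Icc_one_sub_eq_prod_range]
  simpa only [sub_add_cancel, add_sub_right_comm] using h

theorem prod_range_add_eq_mul_prod_Icc (x : R) (a b : ℕ) :
    ∏ i ∈ range (a + b), (x + i) =
      (∏ i ∈ range a, (x + i)) * ∏ j ∈ Icc 1 b, (x + (a + b : ℕ) - j) := by
  rw [prod_range_add, prod_Icc_one_sub_eq_prod_range]
  push_cast
  congr 1
  exact prod_congr rfl fun i _ => by ring

theorem prod_range_natCast_add_one_add_mul_factorial (a b : ℕ) :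
    (∏ i ∈ range b, ((a : R) + 1 + i)) * a ! = (a + b)! := by
  rw [← factorial_mul_ascFactorial, ascFactorial_eq_prod_range, mul_comm]
  push_cast
  rfl

theorem prod_Icc_one_natCast_add_one_sub (m : ℕ) :
    ∏ j ∈ Icc 1 m, ((m : R) + 1 - j) = m ! := by
  simpa [prod_Icc_one_sub_eq_prod_range, add_sub_cancel_left] using
    prod_range_natCast_add_one_add_mul_factorial (R := R) 0 m

end CommRing

noncomputable section

def gnedinWeight (n k : ℕ) (γ : ℝ) (r : ℕ) : ℝ :=
  (∏ j ∈ Icc 1 (k - 1), ((r : ℝ) - j)) / (∏ i ∈ range (n - 1), (1 + (r : ℝ) + i)) *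
    (γ * ∏ i ∈ range (r - 1), (1 - γ + i)) / (r ! : ℝ)

def gnedinNormConst (n k : ℕ) (γ : ℝ) : ℝ :=
  (k - 1)! * (∏ i ∈ range (k - 1), (1 - γ + i)) * (∏ i ∈ range (n - k), (γ + i)) /
    ((n - 1)! * ∏ i ∈ range (n - 1), (1 + γ + i))

end

theorem gnedinWeight_succ {n k r : ℕ} (γ : ℝ) (hn : 1 ≤ n) (hk : 1 ≤ k) (hkr : k ≤ r) :
    gnedinWeight n k γ (r + 1) =
      gnedinWeight n k γ r * ((r : ℝ) * ((r : ℝ) - γ)) / (((r : ℝ) - k + 1) * ((r : ℝ) + n)) := by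
  obtain ⟨l, rfl⟩ : ∃ l, n = l + 1 := ⟨n - 1, by omega⟩
  obtain ⟨m, rfl⟩ : ∃ m, k = m + 1 := ⟨k - 1, by omega⟩
  obtain ⟨s, rfl⟩ : ∃ s, r = s + 1 := ⟨r - 1, by omega⟩
  have hms : (m : ℝ) ≤ s := by exact_mod_cast (by omega : m ≤ s)
  have hs : (0 : ℝ) < s + 1 - (m + 1) + 1 := by linarith
  have hpos : 0 < ∏ i ∈ range l, ((s : ℝ) + 1 + 1 + i) := prod_pos fun i _ => by positivity
  have hfalling : ∏ j ∈ Icc 1 m, ((s : ℝ) + 1 + 1 - j) =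
      (∏ j ∈ Icc 1 m, ((s : ℝ) + 1 - j)) * (s + 1) / (s + 1 - (m + 1) + 1) := by
    rw [eq_div_iff hs.ne', ← prod_Icc_one_add_one_sub_mul]
    ring
  have hrising : ∏ i ∈ range l, ((s : ℝ) + 1 + 1 + 1 + i) =
      (∏ i ∈ range l, ((s : ℝ) + 1 + 1 + i)) * (s + 1 + 1 + l) / (s + 1 + 1) := by
    rw [eq_div_iff (by positivity), prod_range_add_one_add_mul]
  have hshift : ∀ t : ℝ, ∏ i ∈ range l, (1 + t + (i : ℝ)) = ∏ i ∈ range l, (t + 1 + i) :=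
    fun t => prod_congr rfl fun i _ => by ring
  simp only [gnedinWeight, Nat.add_sub_cancel, prod_range_succ _ s, factorial_succ]
  push_cast
  rw [hshift, hshift, hfalling, hrising]
  field_simp
  ring

theorem gnedinWeight_self_div_normConst {n k : ℕ} {γ : ℝ} (hk : 1 ≤ k) (hkn : k ≤ n)
    (hγ0 : 0 < γ) (hγ1 : γ < 1) :
    gnedinWeight n k γ k / gnedinNormConst n k γ =
      (∏ j ∈ Icc 1 k, (γ + (n : ℝ) - j)) / ∏ j ∈ Icc 1 k, ((n : ℝ) - 1 + j) := by
  obtain ⟨m, rfl⟩ : ∃ m, k = m + 1 := ⟨k - 1, by omega⟩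
  obtain ⟨l, rfl⟩ : ∃ l, n = l + (m + 1) := ⟨n - (m + 1), by omega⟩
  simp only [gnedinWeight, gnedinNormConst, Nat.add_sub_cancel, Nat.add_succ_sub_one]
  push_cast
  have hfalling := prod_Icc_one_natCast_add_one_sub (R := ℝ) m
  have hfactorial : (∏ i ∈ range (l + m), (1 + ((m : ℝ) + 1) + i)) * (m + 1)! =
      (l + m)! * ∏ j ∈ Icc 1 (m + 1), ((l : ℝ) + (m + 1) - 1 + j) := by
    have h1 := prod_range_natCast_add_one_add_mul_factorial (R := ℝ) (m + 1) (l + m)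
    have h2 := prod_range_natCast_add_one_add_mul_factorial (R := ℝ) (l + m) (m + 1)
    rw [show m + 1 + (l + m) = l + m + (m + 1) by ring] at h1
    rw [prod_Icc_one_add_eq_prod_range]
    push_cast at h1 h2
    ring_nf at h1 h2 ⊢
    linear_combination h1 - h2
  have hpochhammer : γ * ∏ i ∈ range (l + m), (1 + γ + i) =
      (∏ i ∈ range l, (γ + i)) * ∏ j ∈ Icc 1 (m + 1), (γ + (l + (m + 1)) - j) := by
    calc γ * ∏ i ∈ range (l + m), (1 + γ + i) = γ * ∏ i ∈ range (l + m), (γ + 1 + i) := by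
          simp only [add_comm (1 : ℝ) γ]
      _ = ∏ i ∈ range (l + (m + 1)), (γ + i) := mul_prod_range_add_one_add γ (l + m)
      _ = _ := by rw [prod_range_add_eq_mul_prod_Icc]; push_cast; rfl
  have hB : 0 < ∏ i ∈ range m, (1 - γ + (i : ℝ)) := prod_pos fun i _ => by positivity
  have hE : 0 < ∏ j ∈ Icc 1 (m + 1), ((l : ℝ) + (m + 1) - 1 + j) :=
    prod_pos fun j hj => by
      have : (1 : ℝ) ≤ j := by exact_mod_cast (mem_Icc.1 hj).1
      linarith
  rw [hfalling]
  field_simp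
  linear_combination ((l + m)! * ∏ j ∈ Icc 1 (m + 1), ((l : ℝ) + (m + 1) - 1 + j)) * hpochhammer -
    ((∏ i ∈ range l, (γ + (i : ℝ))) * ∏ j ∈ Icc 1 (m + 1), (γ + (l + (m + 1) : ℝ) - j)) * hfactorial

/-- Recursion and initial value for the normalized full conditional of the number of
components `m` under the Gnedin prior: for `r ≥ k_n`,
`q_{r+1} = q_r · r(r-γ̂) / ((r-k_n+1)(r+n))`, and
`q_{k_n} = ∏_{j=1}^{k_n}(γ̂+n-j) / ∏_{j=1}^{k_n}(n-1+j)`. -/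
theorem gnedin_conditional_recursion
    (n k : ℕ) (hk : 1 ≤ k) (hkn : k ≤ n) (γ : ℝ) (hγ0 : 0 < γ) (hγ1 : γ < 1)
    (q : ℕ → ℝ)
    (hq : ∀ r, k ≤ r → q r =
      ((∏ j ∈ Finset.Icc 1 (k - 1), ((r : ℝ) - j)) /
            (∏ i ∈ Finset.range (n - 1), (1 + (r : ℝ) + i)) *
          (γ * ∏ i ∈ Finset.range (r - 1), (1 - γ + i)) / (Nat.factorial r : ℝ)) /
        ((Nat.factorial (k - 1) : ℝ) * (∏ i ∈ Finset.range (k - 1), (1 - γ + i)) *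
            (∏ i ∈ Finset.range (n - k), (γ + i)) /
          ((Nat.factorial (n - 1) : ℝ) * ∏ i ∈ Finset.range (n - 1), (1 + γ + i)))) :
    (∀ r, k ≤ r →
        q (r + 1) = q r * ((r : ℝ) * ((r : ℝ) - γ)) /
          (((r : ℝ) - k + 1) * ((r : ℝ) + n)))
    ∧ q k = (∏ j ∈ Finset.Icc 1 k, (γ + (n : ℝ) - j)) /
        ∏ j ∈ Finset.Icc 1 k, ((n : ℝ) - 1 + j) := by
  have hq' : ∀ r, k ≤ r → q r = gnedinWeight n k γ r / gnedinNormConst n k γ := hq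
  refine ⟨fun r hr => ?_, ?_⟩
  · rw [hq' (r + 1) (by omega), hq' r hr, gnedinWeight_succ γ (by omega) hk hr]
    ring
  · rw [hq' k le_rfl]
    exact gnedinWeight_self_div_normConst hk hkn hγ0 hγ1
end
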